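/- Let N be a positive integer, let 0 < α < 1/2 with αN an integer, let δ > 0, let x : {1,…,N} → {0,1} be a fixed binary string, and let n₀ be an integer with 1 ≤ n₀ ≤ αN. Sample I_t uniformly among subsets of {1,…,N} of size αN; independently sample an integer n ∈ {n₀, n₀+1, …, αN} according to an arbitrary probability distribution P; and, given (I_t, n), sample I_s uniformly among subsets of I_t of size n. Then the probability that |r_H(x|_{I_s}) − r_H(x|_{\bar{I_t}})| > δ (where \bar{I_t} is the complement of I_t in {1,…,N}) is at most 2·(e^{−(1/2)·α·(1−α)²·N·δ²} + e^{−(1/2)·n₀·δ²}). -/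

import Mathlib

open Finset

/-- Relative Hamming weight of the restriction of `x` to the index set `S`:
`r_H(x|_S) = (number of `i ∈ S` with `x i = 1`) / |S|`. -/
noncomputable def relHamming {N : ℕ} (x : Fin N → Bool) (S : Finset (Fin N)) : ℝ :=
  ((S.filter fun i => x i = true).card : ℝ) / (S.card : ℝ)

open Nat


/-- Scalar Hoeffding lemma. -/
lemma hoeff_scalar {p c : ℝ} (hp0 : 0 ≤ p) (hp1 : p ≤ 1) (hc : 0 ≤ c) :
    1 - p + p * Real.exp c ≤ Real.exp (p * c + c ^ 2 / 8) := by
  set D : ℝ → ℝ := fun c => 1 - p + p * Real.exp c with hDdef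
  have hDpos : ∀ c, 0 < D c := by
    intro c
    have he := Real.exp_pos c
    rcases lt_or_eq_of_le hp1 with h | h
    · have : 0 < 1 - p := by linarith
      have : 0 ≤ p * Real.exp c := mul_nonneg hp0 he.le
      simp only [hDdef]; linarith
    · simp only [hDdef]; rw [h]; linarith
  have hD : ∀ c : ℝ, HasDerivAt D (p * Real.exp c) c := by
    intro c
    exact ((Real.hasDerivAt_exp c).const_mul p).const_add (1 - p)
  -- sigmoid bound : for c ≥ 0, p * exp c / D c - p ≤ c / 4
  set g : ℝ → ℝ := fun c => c / 4 + p - p * Real.exp c / D c with hgdef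
  have hg : ∀ c : ℝ, HasDerivAt g (1/4 - p * Real.exp c * (1 - p) / (D c)^2) c := by
    intro c
    have h1 : HasDerivAt (fun c => p * Real.exp c) (p * Real.exp c) c :=
      (Real.hasDerivAt_exp c).const_mul p
    have h2 : HasDerivAt (fun c => p * Real.exp c / D c)
        ((p * Real.exp c * D c - p * Real.exp c * (p * Real.exp c)) / (D c)^2) c :=
      h1.div (hD c) (hDpos c).ne'
    have h3 : HasDerivAt (fun c => c / 4 + p) (1/4) c := by
      simpa using ((hasDerivAt_id c).div_const 4).add_const p
    have := h3.sub h2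
    refine this.congr_deriv ?_
    have : p * Real.exp c * D c - p * Real.exp c * (p * Real.exp c)
        = p * Real.exp c * (1 - p) := by simp only [hDdef]; ring
    rw [this]
  have hg_nonneg : ∀ c : ℝ, 0 ≤ 1/4 - p * Real.exp c * (1 - p) / (D c)^2 := by
    intro c
    rw [sub_nonneg, div_le_iff₀ (pow_pos (hDpos c) 2)]
    have he := (Real.exp_pos c).le
    nlinarith [sq_nonneg (1 - p - p * Real.exp c), mul_nonneg hp0 he]
  have hgmono : MonotoneOn g (Set.Ici (0:ℝ)) := by
    have hgdiff : Differentiable ℝ g := fun c => (hg c).differentiableAt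
    apply monotoneOn_of_deriv_nonneg (convex_Ici 0)
    · exact hgdiff.continuous.continuousOn
    · intro c _; exact ((hg c).differentiableAt).differentiableWithinAt
    · intro c _
      rw [(hg c).deriv]
      exact hg_nonneg c
  have hgc : ∀ c ≥ (0:ℝ), p * Real.exp c / D c - p ≤ c / 4 := by
    intro c hcge
    have h0 : g 0 = 0 := by
      simp only [hgdef, hDdef, Real.exp_zero, mul_one]
      field_simp
      ring
    have := hgmono (Set.self_mem_Ici) (Set.mem_Ici.2 hcge) hcge
    rw [h0] at this
    simp only [hgdef] at this
    linarith
  -- main function monotone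
  set f : ℝ → ℝ := fun c => p * c + c^2/8 - Real.log (D c) with hfdef
  have hf : ∀ c : ℝ, HasDerivAt f (p + c/4 - p * Real.exp c / D c) c := by
    intro c
    have h1 : HasDerivAt (fun c : ℝ => p * c + c^2/8) (p + c/4) c := by
      have := ((hasDerivAt_id c).const_mul p).add ((hasDerivAt_pow 2 c).div_const 8)
      refine this.congr_deriv ?_; simp; ring
    have h2 : HasDerivAt (fun c => Real.log (D c)) ((D c)⁻¹ * (p * Real.exp c)) c :=
      (Real.hasDerivAt_log (hDpos c).ne').comp c (hD c)
    have := h1.sub h2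
    refine this.congr_deriv ?_
    field_simp
  have hfmono : MonotoneOn f (Set.Ici (0:ℝ)) := by
    have hfdiff : Differentiable ℝ f := fun c => (hf c).differentiableAt
    apply monotoneOn_of_deriv_nonneg (convex_Ici 0)
    · exact hfdiff.continuous.continuousOn
    · intro c _; exact ((hf c).differentiableAt).differentiableWithinAt
    · intro c hcmem
      rw [(hf c).deriv]
      rw [interior_Ici] at hcmem
      have := hgc c (le_of_lt hcmem)
      linarith
  have h0 : f 0 = 0 := by
    simp [hfdef, hDdef]
  have hfin := hfmono (Set.self_mem_Ici) (Set.mem_Ici.2 hc) hc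
  rw [h0] at hfin
  simp only [hfdef] at hfin
  have hlog : Real.log (D c) ≤ p * c + c^2/8 := by linarith
  calc D c = Real.exp (Real.log (D c)) := (Real.exp_log (hDpos c)).symm
    _ ≤ Real.exp (p * c + c^2/8) := Real.exp_le_exp.2 hlog


variable {ι : Type*} [DecidableEq ι]

lemma descFact_ineq {K n : ℕ} (h : K ≤ n) (j : ℕ) :
    K.descFactorial j * n ^ j ≤ n.descFactorial j * K ^ j := by
  induction j with
  | zero => simp
  | succ j ih =>
    rw [Nat.descFactorial_succ, Nat.descFactorial_succ, pow_succ, pow_succ]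
    have key : (K - j) * n ≤ (n - j) * K := by
      rcases le_or_gt j K with hj | hj
      · have h1 : j * K ≤ j * n := Nat.mul_le_mul_left j h
        have h2 : K * n = n * K := Nat.mul_comm _ _
        have h3 : j * n ≤ K * n := Nat.mul_le_mul_right n hj
        rw [Nat.sub_mul, Nat.sub_mul]
        omega
      · simp [Nat.sub_eq_zero_of_le hj.le]
    calc (K - j) * K.descFactorial j * (n ^ j * n)
        = ((K - j) * n) * (K.descFactorial j * n ^ j) := by ring
      _ ≤ ((n - j) * K) * (n.descFactorial j * K ^ j) := Nat.mul_le_mul key ih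
      _ = (n - j) * n.descFactorial j * (K ^ j * K) := by ring

lemma choose_le_mul_pow {K n : ℕ} (h : K ≤ n) (hn : 0 < n) (j : ℕ) :
    (K.choose j : ℝ) ≤ (n.choose j : ℝ) * ((K : ℝ) / n) ^ j := by
  have hnat : K.choose j * n ^ j ≤ n.choose j * K ^ j := by
    have := descFact_ineq h j
    rw [Nat.descFactorial_eq_factorial_mul_choose, Nat.descFactorial_eq_factorial_mul_choose]
      at this
    have hfac : 0 < j ! := Nat.factorial_pos j
    calc K.choose j * n ^ j = (j ! * (K.choose j * n ^ j)) / j ! := by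
          rw [Nat.mul_div_cancel_left _ hfac]
      _ ≤ (j ! * (n.choose j * K ^ j)) / j ! := by
          apply Nat.div_le_div_right
          calc j ! * (K.choose j * n ^ j) = j ! * K.choose j * n ^ j := by ring
            _ ≤ j ! * n.choose j * K ^ j := this
            _ = j ! * (n.choose j * K ^ j) := by ring
      _ = n.choose j * K ^ j := by rw [Nat.mul_div_cancel_left _ hfac]
  have hcast : (K.choose j : ℝ) * (n : ℝ) ^ j ≤ (n.choose j : ℝ) * (K : ℝ) ^ j := by
    exact_mod_cast Nat.cast_le.2 hnat
  have hnpos : (0 : ℝ) < (n : ℝ) ^ j := by positivity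
  rw [div_pow, ← mul_div_assoc, le_div_iff₀ hnpos]
  linarith [hcast]

lemma card_supersets (P J : Finset ι) (hJP : J ⊆ P) (m : ℕ) (hjm : J.card ≤ m) :
    ((P.powersetCard m).filter (fun S => J ⊆ S)).card
      = (P.card - J.card).choose (m - J.card) := by
  have key : ((P.powersetCard m).filter (fun S => J ⊆ S)).card
      = ((P \ J).powersetCard (m - J.card)).card := by
    apply Finset.card_bij' (fun S _ => S \ J) (fun T _ => T ∪ J)
    · intro S hS
      simp only [mem_filter, Finset.mem_powersetCard] at hS
      obtain ⟨⟨hSP, hScard⟩, hJS⟩ := hS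
      rw [Finset.mem_powersetCard]
      constructor
      · exact Finset.sdiff_subset_sdiff hSP (le_refl J)
      · rw [Finset.card_sdiff_of_subset hJS, hScard]
    · intro T hT
      rw [Finset.mem_powersetCard] at hT
      obtain ⟨hTP, hTcard⟩ := hT
      have hdisj : Disjoint T J := by
        exact Finset.disjoint_of_subset_left hTP (Finset.sdiff_disjoint)
      simp only [mem_filter, Finset.mem_powersetCard]
      refine ⟨⟨?_, ?_⟩, Finset.subset_union_right⟩
      · exact Finset.union_subset (hTP.trans (Finset.sdiff_subset)) hJP
      · rw [Finset.card_union_of_disjoint hdisj, hTcard]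
        omega
    · intro S hS
      simp only [mem_filter, Finset.mem_powersetCard] at hS
      exact Finset.sdiff_union_of_subset hS.2
    · intro T hT
      rw [Finset.mem_powersetCard] at hT
      have hdisj : Disjoint T J :=
        Finset.disjoint_of_subset_left hT.1 (Finset.sdiff_disjoint)
      exact Finset.union_sdiff_cancel_right hdisj
  rw [key, Finset.card_powersetCard, Finset.card_sdiff_of_subset hJP]

lemma card_supersets_empty (P J : Finset ι) (m : ℕ) (hjm : m < J.card) :
    ((P.powersetCard m).filter (fun S => J ⊆ S)).card = 0 := by
  rw [Finset.card_eq_zero, Finset.filter_eq_empty_iff]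
  intro S hS
  rw [Finset.mem_powersetCard] at hS
  intro hJS
  have := Finset.card_le_card hJS
  omega

lemma sum_powerset_pow (A : Finset ι) (z : ℝ) :
    ∑ J ∈ A.powerset, z ^ J.card = (z + 1) ^ A.card := by
  have h := Finset.prod_add (fun _ : ι => z) (fun _ : ι => (1:ℝ)) A
  simp only [Finset.prod_const, one_pow, mul_one] at h
  exact h.symm

lemma mgf_bound (P : Finset ι) (y : ι → Bool) (m : ℕ) (hm : m ≤ P.card) (hP : 0 < P.card)
    {x : ℝ} (hx : 1 ≤ x) :
    ∑ S ∈ P.powersetCard m, x ^ (S.filter (fun i => y i = true)).card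
      ≤ (P.card.choose m : ℝ)
        * (1 + ((P.filter (fun i => y i = true)).card : ℝ) / P.card * (x - 1)) ^ m := by
  classical
  set T := P.filter (fun i => y i = true) with hTdef
  have hTP : T ⊆ P := Finset.filter_subset _ _
  set n := P.card with hndef
  set K := T.card with hKdef
  have hKn : K ≤ n := Finset.card_le_card hTP
  have hx0 : (0:ℝ) ≤ x - 1 := by linarith
  set μ : ℝ := (K : ℝ) / n with hμdef
  have hμ0 : 0 ≤ μ := by positivity
  -- Step 1: rewrite each power as a sum over subsets of S ∩ T
  have step1 : ∑ S ∈ P.powersetCard m, x ^ (S.filter (fun i => y i = true)).card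
      = ∑ S ∈ P.powersetCard m, ∑ J ∈ (S ∩ T).powerset, (x - 1) ^ J.card := by
    apply Finset.sum_congr rfl
    intro S hS
    rw [Finset.mem_powersetCard] at hS
    have hfilter : S.filter (fun i => y i = true) = S ∩ T := by
      ext i
      simp only [hTdef, Finset.mem_inter, Finset.mem_filter]
      exact ⟨fun ⟨h1, h2⟩ => ⟨h1, hS.1 h1, h2⟩, fun ⟨h1, _, h3⟩ => ⟨h1, h3⟩⟩
    rw [hfilter, sum_powerset_pow, sub_add_cancel]
  -- Step 2: swap the two sums
  have step2 : ∑ S ∈ P.powersetCard m, ∑ J ∈ (S ∩ T).powerset, (x - 1) ^ J.card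
      = ∑ J ∈ T.powerset,
          ∑ S ∈ (P.powersetCard m).filter (fun S => J ⊆ S), (x - 1) ^ J.card := by
    apply Finset.sum_comm'
    intro S J
    simp only [Finset.mem_powerset, Finset.mem_filter, Finset.subset_inter_iff]
    tauto
  -- Step 3: inner sums are constant
  have step3 : ∑ J ∈ T.powerset,
        ∑ S ∈ (P.powersetCard m).filter (fun S => J ⊆ S), (x - 1) ^ J.card
      = ∑ j ∈ Finset.range (K + 1), ∑ J ∈ T.powersetCard j,
          ((((P.powersetCard m).filter (fun S => J ⊆ S)).card : ℝ) * (x - 1) ^ J.card) := by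
    rw [Finset.sum_powerset]
    apply Finset.sum_congr rfl
    intro j _
    apply Finset.sum_congr rfl
    intro J _
    rw [Finset.sum_const, nsmul_eq_mul]
  rw [step1, step2, step3]
  -- termwise bound
  have key : ∀ j ∈ Finset.range (K + 1), ∑ J ∈ T.powersetCard j,
        ((((P.powersetCard m).filter (fun S => J ⊆ S)).card : ℝ) * (x - 1) ^ J.card)
      ≤ (n.choose m : ℝ) * (m.choose j : ℝ) * (μ * (x - 1)) ^ j := by
    intro j _
    have hcards : ∀ J ∈ T.powersetCard j,
        ((((P.powersetCard m).filter (fun S => J ⊆ S)).card : ℝ) * (x - 1) ^ J.card)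
        = (if j ≤ m then (((n - j).choose (m - j) : ℕ) : ℝ) else 0) * (x - 1) ^ j := by
      intro J hJ
      rw [Finset.mem_powersetCard] at hJ
      obtain ⟨hJT, hJcard⟩ := hJ
      subst hJcard
      by_cases hjm : J.card ≤ m
      · rw [if_pos hjm, card_supersets P J (hJT.trans hTP) m hjm]
      · rw [if_neg hjm, card_supersets_empty P J m (by omega)]
        simp
    rw [Finset.sum_congr rfl hcards, Finset.sum_const, Finset.card_powersetCard, nsmul_eq_mul]
    by_cases hjm : j ≤ m
    · rw [if_pos hjm]
      have h1 : (K.choose j : ℝ) ≤ (n.choose j : ℝ) * μ ^ j := by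
        rw [hμdef]
        exact choose_le_mul_pow hKn hP j
      have h2 : (n.choose j : ℝ) * ((n - j).choose (m - j) : ℝ)
          = (n.choose m : ℝ) * (m.choose j : ℝ) := by
        rw [← Nat.cast_mul, ← Nat.cast_mul, Nat.choose_mul hjm]
      calc (K.choose j : ℝ) * (((n - j).choose (m - j) : ℝ) * (x - 1) ^ j)
          ≤ ((n.choose j : ℝ) * μ ^ j) * (((n - j).choose (m - j) : ℝ) * (x - 1) ^ j) := by
            apply mul_le_mul_of_nonneg_right h1 (by positivity)
        _ = ((n.choose j : ℝ) * ((n - j).choose (m - j) : ℝ)) * (μ ^ j * (x - 1) ^ j) := by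
            ring
        _ = (n.choose m : ℝ) * (m.choose j : ℝ) * (μ * (x - 1)) ^ j := by
            rw [h2, mul_pow]
    · rw [if_neg hjm]
      simp only [mul_zero, zero_mul]
      positivity
  calc ∑ j ∈ Finset.range (K + 1), ∑ J ∈ T.powersetCard j,
        ((((P.powersetCard m).filter (fun S => J ⊆ S)).card : ℝ) * (x - 1) ^ J.card)
      ≤ ∑ j ∈ Finset.range (K + 1), (n.choose m : ℝ) * (m.choose j : ℝ) * (μ * (x - 1)) ^ j :=
        Finset.sum_le_sum key
    _ ≤ ∑ j ∈ Finset.range (max K m + 1), (n.choose m : ℝ) * (m.choose j : ℝ) * (μ * (x - 1)) ^ j := by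
        apply Finset.sum_le_sum_of_subset_of_nonneg
        · exact Finset.range_subset_range.2 (by omega)
        · intro j _ _; positivity
    _ = ∑ j ∈ Finset.range (m + 1), (n.choose m : ℝ) * (m.choose j : ℝ) * (μ * (x - 1)) ^ j := by
        symm
        apply Finset.sum_subset (Finset.range_subset_range.2 (by omega))
        intro j _ hj
        rw [Finset.mem_range, not_lt] at hj
        rw [Nat.choose_eq_zero_of_lt (show m < j by omega)]
        simp
    _ = (n.choose m : ℝ) * (1 + μ * (x - 1)) ^ m := by
        rw [add_comm (1:ℝ), add_pow, Finset.mul_sum]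
        apply Finset.sum_congr rfl
        intro j _
        rw [one_pow]
        ring

lemma hoeff_one_sided (P : Finset ι) (y : ι → Bool) (m : ℕ) (hm0 : 0 < m) (hm : m ≤ P.card)
    {t : ℝ} (ht : 0 < t) :
    ∑ S ∈ P.powersetCard m,
      (if t < ((S.filter (fun i => y i = true)).card : ℝ) / m
              - ((P.filter (fun i => y i = true)).card : ℝ) / P.card then (1:ℝ) else 0)
      ≤ (P.card.choose m : ℝ) * Real.exp (-2 * m * t ^ 2) := by
  classical
  have hP : 0 < P.card := lt_of_lt_of_le hm0 hm
  set K := (P.filter (fun i => y i = true)).card with hKdef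
  set μ : ℝ := (K : ℝ) / P.card with hμdef
  have hμ0 : 0 ≤ μ := by positivity
  have hμ1 : μ ≤ 1 := by
    rw [hμdef, div_le_one (by exact_mod_cast hP)]
    exact_mod_cast Finset.card_le_card (Finset.filter_subset _ _)
  set x : ℝ := Real.exp (4 * t) with hxdef
  have hx1 : (1:ℝ) ≤ x := by
    rw [hxdef, ← Real.exp_zero]
    apply Real.exp_le_exp.2
    positivity
  -- pointwise: indicator ≤ exp(-4t·m(μ+t)) · x^(w S)
  have hpt : ∀ S ∈ P.powersetCard m,
      (if t < ((S.filter (fun i => y i = true)).card : ℝ) / m - μ then (1:ℝ) else 0)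
      ≤ Real.exp (-(4 * t) * (m * (μ + t))) * x ^ (S.filter (fun i => y i = true)).card := by
    intro S _
    set w := (S.filter (fun i => y i = true)).card with hwdef
    have hxw : x ^ w = Real.exp (4 * t * w) := by
      rw [hxdef, ← Real.exp_nat_mul]
      ring_nf
    by_cases hbad : t < (w : ℝ) / m - μ
    · rw [if_pos hbad]
      rw [lt_sub_iff_add_lt] at hbad
      have hmw : (m : ℝ) * (μ + t) ≤ (w : ℝ) := by
        have hmpos : (0:ℝ) < m := by exact_mod_cast hm0
        have h2 := (lt_div_iff₀ hmpos).1 hbad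
        nlinarith
      rw [hxw, ← Real.exp_add]
      rw [show (1:ℝ) = Real.exp 0 by simp]
      apply Real.exp_le_exp.2
      nlinarith
    · rw [if_neg hbad]
      positivity
  calc ∑ S ∈ P.powersetCard m,
      (if t < ((S.filter (fun i => y i = true)).card : ℝ) / m - μ then (1:ℝ) else 0)
      ≤ ∑ S ∈ P.powersetCard m,
          Real.exp (-(4 * t) * (m * (μ + t))) * x ^ (S.filter (fun i => y i = true)).card :=
        Finset.sum_le_sum hpt
    _ = Real.exp (-(4 * t) * (m * (μ + t))) *
          ∑ S ∈ P.powersetCard m, x ^ (S.filter (fun i => y i = true)).card := by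
        rw [Finset.mul_sum]
    _ ≤ Real.exp (-(4 * t) * (m * (μ + t))) *
          ((P.card.choose m : ℝ) * (1 + μ * (x - 1)) ^ m) := by
        apply mul_le_mul_of_nonneg_left _ (Real.exp_pos _).le
        exact mgf_bound P y m hm hP hx1
    _ ≤ Real.exp (-(4 * t) * (m * (μ + t))) *
          ((P.card.choose m : ℝ) * Real.exp (μ * (4 * t) + (4 * t) ^ 2 / 8) ^ m) := by
        apply mul_le_mul_of_nonneg_left _ (Real.exp_pos _).le
        apply mul_le_mul_of_nonneg_left _ (by positivity)
        apply pow_le_pow_left₀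
        · nlinarith [Real.exp_pos (4*t)]
        · have := hoeff_scalar hμ0 hμ1 (by positivity : (0:ℝ) ≤ 4 * t)
          calc 1 + μ * (x - 1) = 1 - μ + μ * x := by ring
            _ ≤ Real.exp (μ * (4 * t) + (4 * t) ^ 2 / 8) := by
                rw [hxdef]; exact this
    _ = (P.card.choose m : ℝ) * Real.exp (-2 * m * t ^ 2) := by
        rw [← Real.exp_nat_mul, mul_left_comm, ← Real.exp_add]
        congr 1
        ring

lemma filter_not_card (S : Finset ι) (y : ι → Bool) :
    (S.filter fun i => (!(y i)) = true).card = S.card - (S.filter fun i => y i = true).card := by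
  have h : (S.filter fun i => (!(y i)) = true) = S \ (S.filter fun i => y i = true) := by
    rw [← Finset.filter_not]
    apply Finset.filter_congr
    intro i _
    simp
  rw [h, Finset.card_sdiff_of_subset (Finset.filter_subset _ _)]

lemma hoeff_two_sided (P : Finset ι) (y : ι → Bool) (m : ℕ) (hm0 : 0 < m) (hm : m ≤ P.card)
    {t : ℝ} (ht : 0 < t) :
    ∑ S ∈ P.powersetCard m,
      (if t < |((S.filter (fun i => y i = true)).card : ℝ) / m
              - ((P.filter (fun i => y i = true)).card : ℝ) / P.card| then (1:ℝ) else 0)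
      ≤ (P.card.choose m : ℝ) * (2 * Real.exp (-2 * m * t ^ 2)) := by
  classical
  have hP : 0 < P.card := lt_of_lt_of_le hm0 hm
  have hmpos : (0:ℝ) < m := by exact_mod_cast hm0
  have hnpos : (0:ℝ) < P.card := by exact_mod_cast hP
  set y' : ι → Bool := fun i => !(y i) with hy'def
  have hflip : ∀ S ∈ P.powersetCard m,
      ((S.filter (fun i => y' i = true)).card : ℝ) / m
        - ((P.filter (fun i => y' i = true)).card : ℝ) / P.card
      = -(((S.filter (fun i => y i = true)).card : ℝ) / m
          - ((P.filter (fun i => y i = true)).card : ℝ) / P.card) := by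
    intro S hS
    rw [Finset.mem_powersetCard] at hS
    obtain ⟨hSP, hScard⟩ := hS
    have h1 : (S.filter fun i => y' i = true).card
        = S.card - (S.filter fun i => y i = true).card := filter_not_card S y
    have h2 : (P.filter fun i => y' i = true).card
        = P.card - (P.filter fun i => y i = true).card := filter_not_card P y
    have hw : (S.filter fun i => y i = true).card ≤ S.card := Finset.card_filter_le _ _
    have hK : (P.filter fun i => y i = true).card ≤ P.card := Finset.card_filter_le _ _
    rw [h1, h2, Nat.cast_sub hw, Nat.cast_sub hK, hScard]
    field_simp
    ring
  have hpt : ∀ S ∈ P.powersetCard m,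
      (if t < |((S.filter (fun i => y i = true)).card : ℝ) / m
              - ((P.filter (fun i => y i = true)).card : ℝ) / P.card| then (1:ℝ) else 0)
      ≤ (if t < ((S.filter (fun i => y i = true)).card : ℝ) / m
              - ((P.filter (fun i => y i = true)).card : ℝ) / P.card then (1:ℝ) else 0)
        + (if t < ((S.filter (fun i => y' i = true)).card : ℝ) / m
              - ((P.filter (fun i => y' i = true)).card : ℝ) / P.card then (1:ℝ) else 0) := by
    intro S hS
    rw [hflip S hS]
    set d : ℝ := ((S.filter (fun i => y i = true)).card : ℝ) / m
              - ((P.filter (fun i => y i = true)).card : ℝ) / P.card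
    by_cases h : t < |d|
    · rw [if_pos h]
      rcases lt_abs.1 h with h' | h'
      · rw [if_pos h']
        have : (0:ℝ) ≤ (if t < -d then (1:ℝ) else 0) := by positivity
        linarith
      · rw [if_pos h']
        have : (0:ℝ) ≤ (if t < d then (1:ℝ) else 0) := by positivity
        linarith
    · rw [if_neg h]
      positivity
  calc ∑ S ∈ P.powersetCard m,
      (if t < |((S.filter (fun i => y i = true)).card : ℝ) / m
              - ((P.filter (fun i => y i = true)).card : ℝ) / P.card| then (1:ℝ) else 0)
      ≤ ∑ S ∈ P.powersetCard m,
        ((if t < ((S.filter (fun i => y i = true)).card : ℝ) / m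
              - ((P.filter (fun i => y i = true)).card : ℝ) / P.card then (1:ℝ) else 0)
        + (if t < ((S.filter (fun i => y' i = true)).card : ℝ) / m
              - ((P.filter (fun i => y' i = true)).card : ℝ) / P.card then (1:ℝ) else 0)) :=
        Finset.sum_le_sum hpt
    _ = (∑ S ∈ P.powersetCard m,
        (if t < ((S.filter (fun i => y i = true)).card : ℝ) / m
              - ((P.filter (fun i => y i = true)).card : ℝ) / P.card then (1:ℝ) else 0))
        + ∑ S ∈ P.powersetCard m,
        (if t < ((S.filter (fun i => y' i = true)).card : ℝ) / m
              - ((P.filter (fun i => y' i = true)).card : ℝ) / P.card then (1:ℝ) else 0) :=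
        Finset.sum_add_distrib
    _ ≤ (P.card.choose m : ℝ) * Real.exp (-2 * m * t ^ 2)
        + (P.card.choose m : ℝ) * Real.exp (-2 * m * t ^ 2) := by
        apply _root_.add_le_add
        · exact hoeff_one_sided P y m hm0 hm ht
        · exact hoeff_one_sided P y' m hm0 hm ht
    _ = (P.card.choose m : ℝ) * (2 * Real.exp (-2 * m * t ^ 2)) := by ring

set_option maxHeartbeats 1000000 in
/-- Lemma B.2(c): Hoeffding inequality for sampling without replacement comparing a
randomly truncated sampled subset with the complement of the full sampled set.
Sample `I_t` uniformly among subsets of `{1,…,N}` of size `αN`; independently sample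
`n ∈ {n₀,…,αN}` according to an arbitrary distribution `P`; given `(I_t, n)`, sample
`I_s` uniformly among `n`-element subsets of `I_t`.  The probability that
`|r_H(x|_{I_s}) − r_H(x|_{\bar I_t})| > δ` is at most
`2·(e^{−α(1−α)²Nδ²/2} + e^{−n₀δ²/2})`. -/
theorem hoeffding_subsample_random (N : ℕ) (hN : 0 < N) (α δ : ℝ)
    (hα0 : 0 < α) (hα : α < 1/2) (hδ : 0 < δ)
    (a : ℕ) (ha : (a : ℝ) = α * N) (x : Fin N → Bool)
    (n₀ : ℕ) (hn₀1 : 1 ≤ n₀) (hn₀2 : n₀ ≤ a)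
    (P : ℕ → ℝ) (hP0 : ∀ n, 0 ≤ P n) (hP1 : ∑ n ∈ Finset.Icc n₀ a, P n = 1) :
    (∑ n ∈ Finset.Icc n₀ a, P n *
      (((Finset.powersetCard a (Finset.univ : Finset (Fin N))).card : ℝ)⁻¹ *
        ∑ It ∈ Finset.powersetCard a (Finset.univ : Finset (Fin N)),
          (((Finset.powersetCard n It).card : ℝ)⁻¹ *
            ∑ Is ∈ Finset.powersetCard n It,
              (if δ < |relHamming x Is - relHamming x Itᶜ| then (1 : ℝ) else 0))))
    ≤ 2 * (Real.exp (-(1/2) * α * (1 - α)^2 * N * δ^2)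
            + Real.exp (-(1/2) * n₀ * δ^2)) := by
  classical
  have hNpos : (0:ℝ) < N := by exact_mod_cast hN
  have hα1 : α < 1 := by linarith
  have haltN : a < N := by
    have h1 : (a:ℝ) < N := by rw [ha]; nlinarith
    exact_mod_cast h1
  have haN : a ≤ N := haltN.le
  have hapos : 0 < a := lt_of_lt_of_le hn₀1 hn₀2
  have hareal : (0:ℝ) < a := by exact_mod_cast hapos
  have hNa : (0:ℝ) < (N:ℝ) - a := by
    have : (a:ℝ) < N := by exact_mod_cast haltN
    linarith
  set eA := Real.exp (-(1/2) * α * (1-α)^2 * N * δ^2) with heA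
  set eB := Real.exp (-(1/2) * (n₀:ℝ) * δ^2) with heB
  set t2 : ℝ := (((N:ℝ) - a)/N) * (δ/2) with ht2
  have ht2pos : 0 < t2 := by rw [ht2]; positivity
  have hucard : (Finset.univ : Finset (Fin N)).card = N := by simp
  have hCN : ((Finset.powersetCard a (Finset.univ : Finset (Fin N))).card : ℝ)
      = (N.choose a : ℝ) := by rw [Finset.card_powersetCard, hucard]
  have hCNpos : (0:ℝ) < ((Finset.powersetCard a (Finset.univ : Finset (Fin N))).card : ℝ) := by
    rw [hCN]; exact_mod_cast Nat.choose_pos haN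
  -- the two exponential rewrites
  have hEa : Real.exp (-2 * (a:ℝ) * t2 ^ 2) = eA := by
    rw [heA, ht2]
    congr 1
    rw [ha]
    have hsub : ((N:ℝ) - α * N)/N = 1 - α := by field_simp
    rw [hsub]
    ring
  have main : ∀ n ∈ Finset.Icc n₀ a,
      (((Finset.powersetCard a (Finset.univ : Finset (Fin N))).card : ℝ)⁻¹ *
        ∑ It ∈ Finset.powersetCard a (Finset.univ : Finset (Fin N)),
          (((Finset.powersetCard n It).card : ℝ)⁻¹ *
            ∑ Is ∈ Finset.powersetCard n It,
              (if δ < |relHamming x Is - relHamming x Itᶜ| then (1 : ℝ) else 0)))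
      ≤ 2 * eA + 2 * eB := by
    intro n hn
    rw [Finset.mem_Icc] at hn
    have hnpos : 0 < n := lt_of_lt_of_le hn₀1 hn.1
    have hnreal : (0:ℝ) < n := by exact_mod_cast hnpos
    set Eb := 2 * Real.exp (-(1/2) * (n:ℝ) * δ^2) with hEbdef
    have hEb : Real.exp (-2 * (n:ℝ) * (δ/2) ^ 2) = Real.exp (-(1/2) * (n:ℝ) * δ^2) := by
      congr 1; ring
    -- per-It bound
    have inner : ∀ It ∈ Finset.powersetCard a (Finset.univ : Finset (Fin N)),
        (((Finset.powersetCard n It).card : ℝ)⁻¹ *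
          ∑ Is ∈ Finset.powersetCard n It,
            (if δ < |relHamming x Is - relHamming x Itᶜ| then (1 : ℝ) else 0))
        ≤ Eb + (if t2 < |((It.filter fun i => x i = true).card : ℝ)/(a:ℝ)
            - (((Finset.univ : Finset (Fin N)).filter fun i => x i = true).card : ℝ)
              /(((Finset.univ : Finset (Fin N)).card) : ℝ)| then (1:ℝ) else 0) := by
      intro It hIt
      have hItcard : It.card = a := (Finset.mem_powersetCard.1 hIt).2
      have hCa : ((Finset.powersetCard n It).card : ℝ) = (a.choose n : ℝ) := by
        rw [Finset.card_powersetCard, hItcard]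
      have hCapos : (0:ℝ) < ((Finset.powersetCard n It).card : ℝ) := by
        rw [hCa]; exact_mod_cast Nat.choose_pos hn.2
      have hcompl_card : (Itᶜ.card : ℝ) = (N:ℝ) - a := by
        rw [Finset.card_compl, hItcard, Fintype.card_fin, Nat.cast_sub haN]
      have hsumw : (It.filter fun i => x i = true).card
          + (Itᶜ.filter fun i => x i = true).card
          = ((Finset.univ : Finset (Fin N)).filter fun i => x i = true).card := by
        rw [← Finset.card_union_of_disjoint
            (Finset.disjoint_filter_filter disjoint_compl_right),
          ← Finset.filter_union, Finset.union_compl]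
      have hkey : relHamming x It - relHamming x Itᶜ
          = ((N:ℝ)/((N:ℝ) - a)) * (((It.filter fun i => x i = true).card : ℝ)/(a:ℝ)
            - (((Finset.univ : Finset (Fin N)).filter fun i => x i = true).card : ℝ)/(N:ℝ)) := by
        simp only [relHamming]
        rw [hItcard]
        have hwc : ((Itᶜ.filter fun i => x i = true).card : ℝ)
            = (((Finset.univ : Finset (Fin N)).filter fun i => x i = true).card : ℝ)
              - ((It.filter fun i => x i = true).card : ℝ) := by
          rw [← hsumw]; push_cast; ring
        rw [hwc, hcompl_card]
        field_simp
        ring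
      -- pointwise indicator bound
      have hpt : ∀ Is ∈ Finset.powersetCard n It,
          (if δ < |relHamming x Is - relHamming x Itᶜ| then (1 : ℝ) else 0)
          ≤ (if δ/2 < |((Is.filter fun i => x i = true).card : ℝ)/(n:ℝ)
                - ((It.filter fun i => x i = true).card : ℝ)/(It.card:ℝ)| then (1:ℝ) else 0)
            + (if t2 < |((It.filter fun i => x i = true).card : ℝ)/(a:ℝ)
                - (((Finset.univ : Finset (Fin N)).filter fun i => x i = true).card : ℝ)
                  /(((Finset.univ : Finset (Fin N)).card) : ℝ)| then (1:ℝ) else 0) := by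
        intro Is hIs
        have hIscard : Is.card = n := (Finset.mem_powersetCard.1 hIs).2
        by_cases h1 : δ/2 < |((Is.filter fun i => x i = true).card : ℝ)/(n:ℝ)
            - ((It.filter fun i => x i = true).card : ℝ)/(It.card:ℝ)|
        · rw [if_pos h1]
          have hle : (if δ < |relHamming x Is - relHamming x Itᶜ| then (1 : ℝ) else 0) ≤ 1 := by
            split <;> norm_num
          have hnn : (0:ℝ) ≤ (if t2 < |((It.filter fun i => x i = true).card : ℝ)/(a:ℝ)
                - (((Finset.univ : Finset (Fin N)).filter fun i => x i = true).card : ℝ)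
                  /(((Finset.univ : Finset (Fin N)).card) : ℝ)| then (1:ℝ) else 0) := by
            split <;> norm_num
          linarith
        · by_cases h2 : t2 < |((It.filter fun i => x i = true).card : ℝ)/(a:ℝ)
              - (((Finset.univ : Finset (Fin N)).filter fun i => x i = true).card : ℝ)
                /(((Finset.univ : Finset (Fin N)).card) : ℝ)|
          · rw [if_pos h2, if_neg h1]
            have hle : (if δ < |relHamming x Is - relHamming x Itᶜ| then (1 : ℝ) else 0) ≤ 1 := by
              split <;> norm_num
            linarith
          · rw [if_neg h1, if_neg h2]
            push_neg at h1 h2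
            have hA : |relHamming x Is - relHamming x It| ≤ δ/2 := by
              simp only [relHamming, hIscard, hItcard]
              rw [hItcard] at h1
              exact h1
            have hB : |relHamming x It - relHamming x Itᶜ| ≤ δ/2 := by
              rw [hkey, abs_mul, abs_of_pos (by positivity : (0:ℝ) < (N:ℝ)/((N:ℝ) - a))]
              rw [hucard] at h2
              calc (N:ℝ)/((N:ℝ) - a) * |((It.filter fun i => x i = true).card : ℝ)/(a:ℝ)
                  - (((Finset.univ : Finset (Fin N)).filter fun i => x i = true).card : ℝ)/(N:ℝ)|
                  ≤ (N:ℝ)/((N:ℝ) - a) * t2 :=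
                    mul_le_mul_of_nonneg_left h2 (by positivity)
                _ = δ/2 := by rw [ht2]; field_simp
            have htot : ¬ (δ < |relHamming x Is - relHamming x Itᶜ|) := by
              push_neg
              calc |relHamming x Is - relHamming x Itᶜ|
                  ≤ |relHamming x Is - relHamming x It| + |relHamming x It - relHamming x Itᶜ| :=
                    abs_sub_le _ _ _
                _ ≤ δ/2 + δ/2 := add_le_add hA hB
                _ = δ := by ring
            rw [if_neg htot]
            norm_num
      -- sum the pointwise bound
      have hsum1 : ∑ Is ∈ Finset.powersetCard n It,
          (if δ < |relHamming x Is - relHamming x Itᶜ| then (1 : ℝ) else 0)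
          ≤ (∑ Is ∈ Finset.powersetCard n It,
              (if δ/2 < |((Is.filter fun i => x i = true).card : ℝ)/(n:ℝ)
                - ((It.filter fun i => x i = true).card : ℝ)/(It.card:ℝ)| then (1:ℝ) else 0))
            + ((Finset.powersetCard n It).card : ℝ)
              * (if t2 < |((It.filter fun i => x i = true).card : ℝ)/(a:ℝ)
                - (((Finset.univ : Finset (Fin N)).filter fun i => x i = true).card : ℝ)
                  /(((Finset.univ : Finset (Fin N)).card) : ℝ)| then (1:ℝ) else 0) := by
        calc ∑ Is ∈ Finset.powersetCard n It,
            (if δ < |relHamming x Is - relHamming x Itᶜ| then (1 : ℝ) else 0)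
            ≤ ∑ Is ∈ Finset.powersetCard n It,
              ((if δ/2 < |((Is.filter fun i => x i = true).card : ℝ)/(n:ℝ)
                - ((It.filter fun i => x i = true).card : ℝ)/(It.card:ℝ)| then (1:ℝ) else 0)
              + (if t2 < |((It.filter fun i => x i = true).card : ℝ)/(a:ℝ)
                - (((Finset.univ : Finset (Fin N)).filter fun i => x i = true).card : ℝ)
                  /(((Finset.univ : Finset (Fin N)).card) : ℝ)| then (1:ℝ) else 0)) :=
              Finset.sum_le_sum hpt
          _ = _ := by
              rw [Finset.sum_add_distrib, Finset.sum_const, nsmul_eq_mul]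
      have hhoef : ∑ Is ∈ Finset.powersetCard n It,
          (if δ/2 < |((Is.filter fun i => x i = true).card : ℝ)/(n:ℝ)
            - ((It.filter fun i => x i = true).card : ℝ)/(It.card:ℝ)| then (1:ℝ) else 0)
          ≤ (It.card.choose n : ℝ) * (2 * Real.exp (-2 * n * (δ/2) ^ 2)) :=
        hoeff_two_sided It x n hnpos (by rw [hItcard]; exact hn.2) (half_pos hδ)
      have hcard' : (((It.card).choose n : ℕ) : ℝ) = ((Finset.powersetCard n It).card : ℝ) := by
        rw [Finset.card_powersetCard]
      rw [hcard'] at hhoef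
      -- combine
      rw [inv_mul_le_iff₀ hCapos]
      calc ∑ Is ∈ Finset.powersetCard n It,
          (if δ < |relHamming x Is - relHamming x Itᶜ| then (1 : ℝ) else 0)
          ≤ ((Finset.powersetCard n It).card : ℝ) * (2 * Real.exp (-2 * n * (δ/2) ^ 2))
            + ((Finset.powersetCard n It).card : ℝ)
              * (if t2 < |((It.filter fun i => x i = true).card : ℝ)/(a:ℝ)
                - (((Finset.univ : Finset (Fin N)).filter fun i => x i = true).card : ℝ)
                  /(((Finset.univ : Finset (Fin N)).card) : ℝ)| then (1:ℝ) else 0) := by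
            exact le_trans hsum1 (by linarith [hhoef])
        _ = ((Finset.powersetCard n It).card : ℝ)
              * (Eb + (if t2 < |((It.filter fun i => x i = true).card : ℝ)/(a:ℝ)
                - (((Finset.univ : Finset (Fin N)).filter fun i => x i = true).card : ℝ)
                  /(((Finset.univ : Finset (Fin N)).card) : ℝ)| then (1:ℝ) else 0)) := by
            rw [hEbdef, hEb]
            ring
    -- sum over It
    have houter : ∑ It ∈ Finset.powersetCard a (Finset.univ : Finset (Fin N)),
        (if t2 < |((It.filter fun i => x i = true).card : ℝ)/(a:ℝ)
            - (((Finset.univ : Finset (Fin N)).filter fun i => x i = true).card : ℝ)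
              /(((Finset.univ : Finset (Fin N)).card) : ℝ)| then (1:ℝ) else 0)
        ≤ (((Finset.univ : Finset (Fin N)).card).choose a : ℝ)
          * (2 * Real.exp (-2 * a * t2 ^ 2)) :=
      hoeff_two_sided (Finset.univ : Finset (Fin N)) x a hapos (by rw [hucard]; exact haN) ht2pos
    have hcard'' : ((((Finset.univ : Finset (Fin N)).card).choose a : ℕ) : ℝ)
        = ((Finset.powersetCard a (Finset.univ : Finset (Fin N))).card : ℝ) := by
      rw [Finset.card_powersetCard]
    rw [hcard''] at houter
    rw [inv_mul_le_iff₀ hCNpos]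
    calc ∑ It ∈ Finset.powersetCard a (Finset.univ : Finset (Fin N)),
        (((Finset.powersetCard n It).card : ℝ)⁻¹ *
          ∑ Is ∈ Finset.powersetCard n It,
            (if δ < |relHamming x Is - relHamming x Itᶜ| then (1 : ℝ) else 0))
        ≤ ∑ It ∈ Finset.powersetCard a (Finset.univ : Finset (Fin N)),
          (Eb + (if t2 < |((It.filter fun i => x i = true).card : ℝ)/(a:ℝ)
            - (((Finset.univ : Finset (Fin N)).filter fun i => x i = true).card : ℝ)
              /(((Finset.univ : Finset (Fin N)).card) : ℝ)| then (1:ℝ) else 0)) :=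
          Finset.sum_le_sum inner
      _ = ((Finset.powersetCard a (Finset.univ : Finset (Fin N))).card : ℝ) * Eb
          + ∑ It ∈ Finset.powersetCard a (Finset.univ : Finset (Fin N)),
            (if t2 < |((It.filter fun i => x i = true).card : ℝ)/(a:ℝ)
              - (((Finset.univ : Finset (Fin N)).filter fun i => x i = true).card : ℝ)
                /(((Finset.univ : Finset (Fin N)).card) : ℝ)| then (1:ℝ) else 0) := by
          rw [Finset.sum_add_distrib, Finset.sum_const, nsmul_eq_mul]
      _ ≤ ((Finset.powersetCard a (Finset.univ : Finset (Fin N))).card : ℝ) * Eb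
          + ((Finset.powersetCard a (Finset.univ : Finset (Fin N))).card : ℝ)
            * (2 * Real.exp (-2 * a * t2 ^ 2)) := by
          linarith [houter]
      _ = ((Finset.powersetCard a (Finset.univ : Finset (Fin N))).card : ℝ) * (2 * eA + 2 * eB)
          - ((Finset.powersetCard a (Finset.univ : Finset (Fin N))).card : ℝ)
            * (2 * eB - Eb) := by
          rw [hEa]
          ring
      _ ≤ ((Finset.powersetCard a (Finset.univ : Finset (Fin N))).card : ℝ) * (2 * eA + 2 * eB) := by
          have hmono : Eb ≤ 2 * eB := by
            rw [hEbdef, heB]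
            have : Real.exp (-(1/2) * (n:ℝ) * δ^2) ≤ Real.exp (-(1/2) * (n₀:ℝ) * δ^2) := by
              apply Real.exp_le_exp.2
              have hcast : (n₀:ℝ) ≤ (n:ℝ) := by exact_mod_cast hn.1
              nlinarith [sq_nonneg δ]
            linarith
          nlinarith [hCNpos]
  calc (∑ n ∈ Finset.Icc n₀ a, P n *
      (((Finset.powersetCard a (Finset.univ : Finset (Fin N))).card : ℝ)⁻¹ *
        ∑ It ∈ Finset.powersetCard a (Finset.univ : Finset (Fin N)),
          (((Finset.powersetCard n It).card : ℝ)⁻¹ *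
            ∑ Is ∈ Finset.powersetCard n It,
              (if δ < |relHamming x Is - relHamming x Itᶜ| then (1 : ℝ) else 0))))
      ≤ ∑ n ∈ Finset.Icc n₀ a, P n * (2 * eA + 2 * eB) :=
        Finset.sum_le_sum (fun n hn => mul_le_mul_of_nonneg_left (main n hn) (hP0 n))
    _ = 2 * eA + 2 * eB := by rw [← Finset.sum_mul, hP1, one_mul]
    _ = 2 * (eA + eB) := by ring
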